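/- Let M : ℝ → ℝ be positive and continuously differentiable, and let γ : [0,τ] → ℝ be a C², strictly monotonically decreasing solution of the Euler–Lagrange equation M(γ) γ̈ + (1/2) M'(γ) γ̇² = 0. Set H₀ = (1/2) M(γ(0)) γ̇(0)². Then for every t ∈ [0,τ], ∫_{γ(t)}^{γ(0)} √(M(s)) ds = √(2 H₀) · t. -/

import Mathlib

/-!
Multiplying the Euler–Lagrange equation by `2 γ̇` shows that the energy `(1/2) M(γ) γ̇²` has
derivative zero, so it stays equal to `H₀`. A decreasing `γ` has `γ̇ ≤ 0`, hence
`√(M(γ)) γ̇ = -√(2 H₀)`; this is the derivative of `t ↦ -∫_{γ(t)}^{γ(0)} √M`, which therefore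
grows linearly with slope `√(2 H₀)`.
-/

open Set

noncomputable def lagrangian (M : ℝ → ℝ) (x v : ℝ) : ℝ := 1 / 2 * M x * v ^ 2

lemma HasDerivAt.nonpos_of_antitoneOn_Icc {f : ℝ → ℝ} {f' a b x : ℝ} (hd : HasDerivAt f f' x)
    (hf : AntitoneOn f (Icc a b)) (hab : a < b) (hx : x ∈ Icc a b) : f' ≤ 0 :=
  hd.hasDerivWithinAt.nonpos_of_antitoneOn
    (uniqueDiffWithinAt_iff_accPt.mp (uniqueDiffOn_Icc hab x hx)) hf

lemma sqrt_mul_neg_eq_sqrt_two_mul_lagrangian {M : ℝ → ℝ} {x v : ℝ} (hM : 0 ≤ M x)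
    (hv : v ≤ 0) : √(M x) * -v = √(2 * lagrangian M x v) := by
  have h : 2 * lagrangian M x v = M x * v ^ 2 := by unfold lagrangian; ring
  rw [h, Real.sqrt_mul hM, Real.sqrt_sq_eq_abs, abs_of_nonpos hv]

section EulerLagrange

variable {M γ : ℝ → ℝ}

lemma hasDerivAt_lagrangian_comp {t : ℝ} (hM : DifferentiableAt ℝ M (γ t))
    (hγ : DifferentiableAt ℝ γ t) (hγ' : DifferentiableAt ℝ (deriv γ) t) :
    HasDerivAt (fun t ↦ lagrangian M (γ t) (deriv γ t))
      (deriv γ t * (M (γ t) * deriv (deriv γ) t + 1 / 2 * deriv M (γ t) * deriv γ t ^ 2)) t := by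
  have hMγ : HasDerivAt (fun t ↦ M (γ t)) (deriv M (γ t) * deriv γ t) t :=
    hM.hasDerivAt.comp t hγ.hasDerivAt
  have hsq : HasDerivAt (fun t ↦ deriv γ t ^ 2) (2 * deriv γ t * deriv (deriv γ) t) t := by
    simpa using hγ'.hasDerivAt.fun_pow 2
  exact ((hMγ.const_mul (1 / 2)).mul hsq).congr_deriv (by ring)

lemma lagrangian_eq_of_eulerLagrange {a b : ℝ} (hM : Differentiable ℝ M)
    (hγ : Differentiable ℝ γ) (hγ' : Differentiable ℝ (deriv γ))
    (hEL : ∀ t ∈ Ico a b,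
      M (γ t) * deriv (deriv γ) t + 1 / 2 * deriv M (γ t) * deriv γ t ^ 2 = 0) :
    ∀ t ∈ Icc a b, lagrangian M (γ t) (deriv γ t) = lagrangian M (γ a) (deriv γ a) := by
  have hd := fun t ↦ hasDerivAt_lagrangian_comp (hM (γ t)) (hγ t) (hγ' t)
  refine constant_of_has_deriv_right_zero
    (fun t _ ↦ (hd t).continuousAt.continuousWithinAt) fun t ht ↦ ?_
  simpa only [hEL t ht, mul_zero] using (hd t).hasDerivWithinAt (s := Ici t)

end EulerLagrange

lemma integral_comp_eq_of_mul_deriv_eq {ρ γ : ℝ → ℝ} {a b c : ℝ} (hρ : Continuous ρ)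
    (hγ : Differentiable ℝ γ) (hspeed : ∀ x ∈ Ico a b, ρ (γ x) * deriv γ x = -c) :
    ∀ t ∈ Icc a b, ∫ s in γ t..γ a, ρ s = c * (t - a) := by
  have hd : ∀ x, HasDerivAt (fun t ↦ ∫ s in γ t..γ a, ρ s) (-ρ (γ x) * deriv γ x) x := fun x ↦
    (intervalIntegral.integral_hasDerivAt_left (hρ.intervalIntegrable _ _)
      (hρ.stronglyMeasurableAtFilter _ _) hρ.continuousAt).comp x (hγ x).hasDerivAt
  have hlin : ∀ x, HasDerivAt (fun t ↦ c * (t - a)) c x := fun x ↦ by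
    simpa using ((hasDerivAt_id x).sub_const a).const_mul c
  refine eq_of_has_deriv_right_eq (fun x hx ↦ ?_) (fun x _ ↦ (hlin x).hasDerivWithinAt)
    (fun x _ ↦ (hd x).continuousAt.continuousWithinAt)
    (fun x _ ↦ (hlin x).continuousAt.continuousWithinAt) (by simp)
  simpa [hspeed x hx] using (hd x).hasDerivWithinAt (s := Ici x)

theorem eulerLagrange_complete_integral_general
    (τ : ℝ)
    (M γ : ℝ → ℝ) (hM : ContDiff ℝ 1 M) (hMpos : ∀ x, 0 < M x)
    (hγ : ContDiff ℝ 2 γ)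
    (hmono : StrictAntiOn γ (Set.Icc (0 : ℝ) τ))
    (hEL : ∀ t ∈ Set.Icc (0 : ℝ) τ,
      M (γ t) * deriv (deriv γ) t
        + (1 / 2) * deriv M (γ t) * (deriv γ t) ^ 2 = 0) :
    ∀ t ∈ Set.Icc (0 : ℝ) τ,
      ∫ s in (γ t)..(γ 0), Real.sqrt (M s)
        = Real.sqrt (2 * ((1 / 2) * M (γ 0) * (deriv γ 0) ^ 2)) * t := by
  have hγ₁ : Differentiable ℝ γ := hγ.differentiable two_ne_zero
  have hγ₂ : Differentiable ℝ (deriv γ) :=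
    (contDiff_succ_iff_deriv.mp hγ).2.2.differentiable one_ne_zero
  have hL := lagrangian_eq_of_eulerLagrange (hM.differentiable one_ne_zero) hγ₁ hγ₂
    fun t ht ↦ hEL t (Ico_subset_Icc_self ht)
  have hspeed : ∀ x ∈ Ico 0 τ,
      √(M (γ x)) * deriv γ x = -√(2 * lagrangian M (γ 0) (deriv γ 0)) := by
    intro x hx
    have hneg : deriv γ x ≤ 0 := (hγ₁ x).hasDerivAt.nonpos_of_antitoneOn_Icc
      (hmono.antitoneOn.mono (Icc_subset_Icc_left hx.1)) hx.2 (left_mem_Icc.mpr hx.2.le)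
    rw [← hL x (Ico_subset_Icc_self hx),
      ← sqrt_mul_neg_eq_sqrt_two_mul_lagrangian (hMpos _).le hneg, mul_neg, neg_neg]
  intro t ht
  rw [integral_comp_eq_of_mul_deriv_eq hM.continuous.sqrt hγ₁ hspeed t ht,
    sub_zero, lagrangian]

/-- For a positive C¹ mass function `M` and a C², strictly
monotonically decreasing solution `γ : [0, τ] → ℝ` of the Euler–Lagrange equation
`M(γ) γ̈ + (1/2) M'(γ) γ̇² = 0`, with `H₀ = (1/2) M(γ(0)) γ̇(0)²`, one has the
complete integral `∫_{γ(t)}^{γ(0)} √(M(s)) ds = √(2 H₀) · t` for every `t ∈ [0, τ]`. -/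
theorem eulerLagrange_complete_integral
    (τ : ℝ) (hτ : 0 < τ)
    (M γ : ℝ → ℝ) (hM : ContDiff ℝ 1 M) (hMpos : ∀ x, 0 < M x)
    (hγ : ContDiff ℝ 2 γ)
    (hmono : StrictAntiOn γ (Set.Icc (0 : ℝ) τ))
    (hEL : ∀ t ∈ Set.Icc (0 : ℝ) τ,
      M (γ t) * deriv (deriv γ) t
        + (1 / 2) * deriv M (γ t) * (deriv γ t) ^ 2 = 0) :
    ∀ t ∈ Set.Icc (0 : ℝ) τ,
      ∫ s in (γ t)..(γ 0), Real.sqrt (M s)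
        = Real.sqrt (2 * ((1 / 2) * M (γ 0) * (deriv γ 0) ^ 2)) * t :=
  eulerLagrange_complete_integral_general τ M γ hM hMpos hγ hmono hEL
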